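/- Let X be a real Banach space with a Schauder basis (e_n)_{n∈ℕ} and let Y be an infinite-dimensional closed subspace of X. Then Y contains a semi-normalized sequence (v_j)_{j∈ℕ} that is equivalent to some block basic sequence with respect to (e_n). -/

import Mathlib

open scoped BigOperators

/-- `e` is a Schauder basis of `X`: every vector has a unique expansion as a norm-convergent
series `∑ n, a n • e n` (partial sums over `Finset.range N`). -/
def IsSchauderBasis {X : Type*} [NormedAddCommGroup X] [NormedSpace ℝ X] (e : ℕ → X) : Prop :=
  ∀ x : X, ∃! a : ℕ → ℝ,
    Filter.Tendsto (fun N => ∑ n ∈ Finset.range N, a n • e n) Filter.atTop (nhds x)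

/-- `u` is a block basic sequence with respect to `e`. -/
def IsBlockBasic {X : Type*} [NormedAddCommGroup X] [NormedSpace ℝ X]
    (e : ℕ → X) (u : ℕ → X) : Prop :=
  ∃ (A : ℕ → Finset ℕ) (a : ℕ → ℝ),
    (∀ j, (A j).Nonempty) ∧
    (∀ j, ∀ m ∈ A j, ∀ k ∈ A (j + 1), m < k) ∧
    (∀ j, u j = ∑ n ∈ A j, a n • e n)

/-- A sequence is semi-normalized if its norms are bounded away from zero and from infinity. -/
def SemiNormalized {X : Type*} [NormedAddCommGroup X] (u : ℕ → X) : Prop :=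
  ∃ c C : ℝ, 0 < c ∧ ∀ j, c ≤ ‖u j‖ ∧ ‖u j‖ ≤ C

/-- Two sequences (possibly in different spaces) are equivalent. -/
def SeqEquiv {X Y : Type*} [NormedAddCommGroup X] [NormedSpace ℝ X]
    [NormedAddCommGroup Y] [NormedSpace ℝ Y] (u : ℕ → X) (w : ℕ → Y) : Prop :=
  ∃ C : ℝ, 1 ≤ C ∧ ∀ (a : ℕ → ℝ) (s : Finset ℕ),
    C⁻¹ * ‖∑ j ∈ s, a j • w j‖ ≤ ‖∑ j ∈ s, a j • u j‖ ∧
    ‖∑ j ∈ s, a j • u j‖ ≤ C * ‖∑ j ∈ s, a j • w j‖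

/-- A bounded linear operator is compact if the image of the closed unit ball is
relatively compact. -/
def CompactOp {X Y : Type*} [NormedAddCommGroup X] [NormedSpace ℝ X]
    [NormedAddCommGroup Y] [NormedSpace ℝ Y] (T : Y →L[ℝ] X) : Prop :=
  IsCompact (closure (T '' Metric.closedBall 0 1))

/-- `e` is an unconditional basis of `X`. -/
def IsUncondBasis {X : Type*} [NormedAddCommGroup X] [NormedSpace ℝ X] (e : ℕ → X) : Prop :=
  (∀ n, e n ≠ 0) ∧ ∀ x : X, ∃! a : ℕ → ℝ, HasSum (fun n => a n • e n) x

/-- `u` is disjointly finitely supported with respect to `e`. -/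
def DisjSupported {X : Type*} [NormedAddCommGroup X] [NormedSpace ℝ X]
    (e : ℕ → X) (u : ℕ → X) : Prop :=
  ∃ A : ℕ → Finset ℕ, Pairwise (Function.onFun Disjoint A) ∧
    ∀ j, u j ∈ Submodule.span ℝ (e '' (A j : Set ℕ))

/-- The basis `e` satisfies a lower `q`-estimate. -/
def LowerEstimate {X : Type*} [NormedAddCommGroup X] [NormedSpace ℝ X]
    (e : ℕ → X) (q : ℝ) : Prop :=
  ∃ C : ℝ, 0 < C ∧ ∀ (m : ℕ) (f : Fin m → X) (A : Fin m → Finset ℕ),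
    Pairwise (Function.onFun Disjoint A) →
    (∀ i, f i ∈ Submodule.span ℝ (e '' (A i : Set ℕ))) →
    (∑ i, ‖f i‖ ^ q) ^ (1 / q) ≤ C * ‖∑ i, f i‖

/-- The basis `e` satisfies an upper `q`-estimate. -/
def UpperEstimate {X : Type*} [NormedAddCommGroup X] [NormedSpace ℝ X]
    (e : ℕ → X) (q : ℝ) : Prop :=
  ∃ C : ℝ, 0 < C ∧ ∀ (m : ℕ) (f : Fin m → X) (A : Fin m → Finset ℕ),
    Pairwise (Function.onFun Disjoint A) →
    (∀ i, f i ∈ Submodule.span ℝ (e '' (A i : Set ℕ))) →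
    ‖∑ i, f i‖ ≤ C * (∑ i, ‖f i‖ ^ q) ^ (1 / q)

/-- `u` is equivalent to the canonical basis of `ℓ_q`. -/
def EquivCanonLq {X : Type*} [NormedAddCommGroup X] [NormedSpace ℝ X]
    (u : ℕ → X) (q : ℝ) : Prop :=
  ∃ C : ℝ, 1 ≤ C ∧ ∀ (a : ℕ → ℝ) (s : Finset ℕ),
    C⁻¹ * (∑ j ∈ s, |a j| ^ q) ^ (1 / q) ≤ ‖∑ j ∈ s, a j • u j‖ ∧
    ‖∑ j ∈ s, a j • u j‖ ≤ C * (∑ j ∈ s, |a j| ^ q) ^ (1 / q)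

/-- `Z` contains an isomorphic copy of `ℓ_q`: there is a bounded linear map `J : ℓ_q → Z`
which is bounded below. -/
def ContainsLp (Z : Type*) [NormedAddCommGroup Z] [NormedSpace ℝ Z] (q : ℝ) : Prop :=
  ∃ (J : lp (fun _ : ℕ => ℝ) (ENNReal.ofReal q) →ₗ[ℝ] Z) (C c : ℝ), 0 < c ∧
    ∀ f, ‖J f‖ ≤ C * ‖f‖ ∧ c * ‖f‖ ≤ ‖J f‖

/-- `T` is strictly singular: it is bounded below on no infinite-dimensional subspace. -/
def StrictlySingular {X Y : Type*} [NormedAddCommGroup X] [NormedSpace ℝ X]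
    [NormedAddCommGroup Y] [NormedSpace ℝ Y] (T : Y →L[ℝ] X) : Prop :=
  ∀ (Z : Submodule ℝ Y) (c : ℝ), 0 < c → (∀ z ∈ Z, c * ‖z‖ ≤ ‖T z‖) →
    FiniteDimensional ℝ Z

/-- A finite family of Banach spaces is splitting for unconditional bases. -/
def SplittingFamily {ι : Type*} [Fintype ι] (Z : ι → Type*)
    [∀ i, NormedAddCommGroup (Z i)] [∀ i, NormedSpace ℝ (Z i)] : Prop :=
  ∀ w : ℕ → (∀ i, Z i), IsUncondBasis w →
    ∃ N : ι → Set ℕ, Pairwise (Function.onFun Disjoint N) ∧ (⋃ i, N i) = Set.univ ∧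
      ∀ i, Nonempty ((Submodule.span ℝ (w '' N i)).topologicalClosure ≃L[ℝ] Z i)

/-- A pair of Banach spaces is splitting for unconditional bases. -/
def SplittingPair (U V : Type*) [NormedAddCommGroup U] [NormedSpace ℝ U]
    [NormedAddCommGroup V] [NormedSpace ℝ V] : Prop :=
  ∀ w : ℕ → U × V, IsUncondBasis w →
    ∃ N₁ N₂ : Set ℕ, Disjoint N₁ N₂ ∧ N₁ ∪ N₂ = Set.univ ∧
      Nonempty ((Submodule.span ℝ (w '' N₁)).topologicalClosure ≃L[ℝ] U) ∧
      Nonempty ((Submodule.span ℝ (w '' N₂)).topologicalClosure ≃L[ℝ] V)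

/-- `U` has a unique, up to equivalence and permutation, unconditional basis. -/
def HasUTAPBasis (U : Type*) [NormedAddCommGroup U] [NormedSpace ℝ U] : Prop :=
  ∃ e : ℕ → U, IsUncondBasis e ∧ SemiNormalized e ∧
    ∀ f : ℕ → U, IsUncondBasis f → SemiNormalized f →
      ∃ π : Equiv.Perm ℕ, SeqEquiv (fun n => f (π n)) e

/-- `y` is a subsymmetric basic sequence: semi-normalized, an unconditional basis of its
closed linear span, and equivalent to all of its subsequences. -/
def IsSubsymmetric {X : Type*} [NormedAddCommGroup X] [NormedSpace ℝ X] (y : ℕ → X) : Prop :=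
  SemiNormalized y ∧ (∀ n, y n ≠ 0) ∧
  (∀ x : X, x ∈ (Submodule.span ℝ (Set.range y)).topologicalClosure →
    ∃! a : ℕ → ℝ, HasSum (fun n => a n • y n) x) ∧
  ∀ k : ℕ → ℕ, StrictMono k → SeqEquiv (fun n => y (k n)) y

/-!
The partial-sum projections `Pₙ` of a Schauder basis are uniformly bounded, `‖Pₙ x‖ ≤ K ‖x‖`:
the map `x ↦ (Pₙ x)ₙ` into bounded sequences has closed graph. Since `Y` is infinite-dimensional,
every `Pₙ` kills a unit vector of `Y`. Gliding hump: pick unit vectors `yⱼ ∈ Y` with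
`P_{Nⱼ} yⱼ = 0` and then `N_{j+1}` so large that `yⱼ` is `δⱼ`-close to its block
`uⱼ = (P_{N_{j+1}} - P_{Nⱼ}) yⱼ`. Then `‖uⱼ‖ ≥ 1/2`, and since `cⱼ uⱼ` is a difference of two
projections of `∑ cᵢ uᵢ`, we get `|cⱼ| ≤ 4K ‖∑ cᵢ uᵢ‖`. With `∑ δⱼ ≤ 1/(8K)` this gives
`‖∑ cⱼ (yⱼ - uⱼ)‖ ≤ ‖∑ cⱼ uⱼ‖ / 2`, so `(yⱼ)` and `(uⱼ)` are equivalent with constant 2.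
-/

open Filter Finset Topology BoundedContinuousFunction

namespace IsSchauderBasis

variable {X : Type*} [NormedAddCommGroup X] [NormedSpace ℝ X] {e : ℕ → X}
  (he : IsSchauderBasis e)

noncomputable def coeff (x : X) : ℕ → ℝ := (he x).choose

theorem tendsto_sum_coeff_smul (x : X) :
    Tendsto (fun N => ∑ n ∈ range N, he.coeff x n • e n) atTop (𝓝 x) :=
  (he x).choose_spec.1

theorem coeff_eq_of_tendsto {x : X} {a : ℕ → ℝ}
    (h : Tendsto (fun N => ∑ n ∈ range N, a n • e n) atTop (𝓝 x)) : he.coeff x = a :=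
  ((he x).choose_spec.2 a h).symm

theorem coeff_add (x y : X) : he.coeff (x + y) = he.coeff x + he.coeff y :=
  he.coeff_eq_of_tendsto <| by
    simpa only [Pi.add_apply, add_smul, sum_add_distrib] using
      (he.tendsto_sum_coeff_smul x).add (he.tendsto_sum_coeff_smul y)

theorem coeff_smul (c : ℝ) (x : X) : he.coeff (c • x) = c • he.coeff x :=
  he.coeff_eq_of_tendsto <| by
    simpa only [Pi.smul_apply, smul_eq_mul, mul_smul, ← smul_sum] using
      (he.tendsto_sum_coeff_smul x).const_smul c

theorem coeff_sum_smul (T : Finset ℕ) (b : ℕ → ℝ) :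
    he.coeff (∑ n ∈ T, b n • e n) = fun n => if n ∈ T then b n else 0 := by
  refine he.coeff_eq_of_tendsto (tendsto_atTop_of_eventually_const (i₀ := T.sup id + 1) ?_)
  intro N hN
  have hT : T ⊆ range N := fun n hn =>
    mem_range.2 ((le_sup (f := id) hn).trans_lt (Nat.lt_of_succ_le hN))
  simp only [ite_smul, zero_smul, sum_ite_mem, inter_eq_right.2 hT]

noncomputable def proj (N : ℕ) : X →ₗ[ℝ] X where
  toFun x := ∑ n ∈ range N, he.coeff x n • e n
  map_add' x y := by simp only [coeff_add, Pi.add_apply, add_smul, sum_add_distrib]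
  map_smul' c x := by simp only [coeff_smul, Pi.smul_apply, smul_eq_mul, mul_smul,
    RingHom.id_apply, smul_sum]

theorem proj_apply (N : ℕ) (x : X) : he.proj N x = ∑ n ∈ range N, he.coeff x n • e n := rfl

theorem tendsto_proj (x : X) : Tendsto (fun N => he.proj N x) atTop (𝓝 x) :=
  he.tendsto_sum_coeff_smul x

theorem proj_zero (x : X) : he.proj 0 x = 0 := by simp [proj_apply]

theorem proj_succ_sub_proj (N : ℕ) (x : X) :
    he.proj (N + 1) x - he.proj N x = he.coeff x N • e N := by
  simp only [proj_apply, sum_range_succ, add_sub_cancel_left]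

theorem proj_sum_smul (M : ℕ) (T : Finset ℕ) (b : ℕ → ℝ) :
    he.proj M (∑ n ∈ T, b n • e n) = ∑ n ∈ T with n < M, b n • e n := by
  simp only [proj_apply, coeff_sum_smul, ite_smul, zero_smul, sum_ite_mem]
  congr 1
  ext n
  simp [and_comm]

theorem proj_eq_of_tendsto {x : X} {z : ℕ → X} (hz0 : z 0 = 0)
    (hsucc : ∀ N, z (N + 1) - z N ∈ ℝ ∙ e N) (hz : Tendsto z atTop (𝓝 x)) (N : ℕ) :
    he.proj N x = z N := by
  choose b hb using fun N => Submodule.mem_span_singleton.1 (hsucc N)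
  have hzb : ∀ N, z N = ∑ n ∈ range N, b n • e n := fun N => by
    rw [← sub_zero (z N), ← hz0, ← sum_range_sub]
    exact sum_congr rfl fun n _ => (hb n).symm
  rw [proj_apply, he.coeff_eq_of_tendsto (hz.congr hzb), hzb]

noncomputable def partialSums : X →ₗ[ℝ] ℕ →ᵇ X where
  toFun x := BoundedContinuousFunction.ofNormedAddCommGroupDiscrete (fun N => he.proj N x)
    (⨆ N, ‖he.proj N x‖) fun N => le_ciSup (he.tendsto_proj x).norm.bddAbove_range N
  map_add' x y := by ext N; simp
  map_smul' c x := by ext N; simp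

theorem partialSums_apply (x : X) (N : ℕ) : he.partialSums x N = he.proj N x := rfl

theorem continuous_partialSums [CompleteSpace X] : Continuous he.partialSums := by
  refine he.partialSums.continuous_of_seq_closed_graph fun x x₀ z hx hz => ?_
  have hunif := BoundedContinuousFunction.tendsto_iff_tendstoUniformly.1 hz
  ext N
  refine (he.proj_eq_of_tendsto ?_ (fun N => ?_) ?_ N).symm
  · exact tendsto_nhds_unique (hunif.tendsto_at 0)
      (by simp [partialSums_apply, proj_zero])
  · refine (Submodule.closed_of_finiteDimensional _).mem_of_tendsto
      ((hunif.tendsto_at (N + 1)).sub (hunif.tendsto_at N)) (Eventually.of_forall fun k => ?_)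
    simp only [Function.comp_apply, partialSums_apply, proj_succ_sub_proj]
    exact Submodule.smul_mem _ _ (Submodule.mem_span_singleton_self _)
  · exact hunif.tendsto_of_eventually_tendsto
      (Eventually.of_forall fun k => he.tendsto_proj (x k)) hx

theorem exists_norm_proj_le [CompleteSpace X] :
    ∃ K, 1 ≤ K ∧ ∀ N x, ‖he.proj N x‖ ≤ K * ‖x‖ := by
  let S : X →L[ℝ] ℕ →ᵇ X := ⟨he.partialSums, he.continuous_partialSums⟩
  refine ⟨max ‖S‖ 1, le_max_right _ _, fun N x => ?_⟩
  calc ‖he.proj N x‖ = ‖S x N‖ := rfl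
    _ ≤ ‖S x‖ := BoundedContinuousFunction.norm_coe_le_norm _ _
    _ ≤ ‖S‖ * ‖x‖ := S.le_opNorm x
    _ ≤ max ‖S‖ 1 * ‖x‖ := by gcongr; exact le_max_left _ _

theorem proj_mem_span (N : ℕ) (x : X) :
    he.proj N x ∈ Submodule.span ℝ (e '' Set.Iio N) := by
  rw [proj_apply]
  exact Submodule.sum_mem _ fun n hn =>
    Submodule.smul_mem _ _ (Submodule.subset_span (Set.mem_image_of_mem e (mem_range.1 hn)))

theorem exists_mem_norm_eq_one_proj_eq_zero {Y : Submodule ℝ X} (hY : ¬ FiniteDimensional ℝ Y)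
    (N : ℕ) : ∃ y ∈ Y, ‖y‖ = 1 ∧ he.proj N y = 0 := by
  let f := he.proj N ∘ₗ Y.subtype
  have : FiniteDimensional ℝ (Submodule.span ℝ (e '' Set.Iio N)) :=
    FiniteDimensional.span_of_finite ℝ ((Set.finite_Iio N).image e)
  have : FiniteDimensional ℝ (LinearMap.range f) :=
    Submodule.finiteDimensional_of_le (S₂ := Submodule.span ℝ (e '' Set.Iio N))
      (by rintro _ ⟨y, rfl⟩; exact he.proj_mem_span N y)
  obtain ⟨y, hfy, hy0⟩ : ∃ y : Y, f y = 0 ∧ y ≠ 0 := by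
    by_contra! h
    exact hY (Module.Finite.of_injective f.rangeRestrict
      ((LinearMap.injective_rangeRestrict_iff f).2 ((injective_iff_map_eq_zero f).2 h)))
  refine ⟨‖(y : X)‖⁻¹ • (y : X), Y.smul_mem _ y.2, norm_smul_inv_norm (by simpa using hy0), ?_⟩
  rw [map_smul, show he.proj N y = 0 from hfy, smul_zero]

theorem exists_gliding_hump {Y : Submodule ℝ X} (hY : ¬ FiniteDimensional ℝ Y) {δ : ℕ → ℝ}
    (hδ : ∀ j, 0 < δ j) :
    ∃ (N : ℕ → ℕ) (y : ℕ → X), StrictMono N ∧ ∀ j, y j ∈ Y ∧ ‖y j‖ = 1 ∧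
      ‖y j - ∑ n ∈ Ico (N j) (N (j + 1)), he.coeff (y j) n • e n‖ < δ j := by
  choose z hzY hz1 hPz using he.exists_mem_norm_eq_one_proj_eq_zero hY
  have hnext : ∀ j M, ∃ M', M < M' ∧ ‖he.proj M' (z M) - z M‖ < δ j := fun j M => by
    simpa only [dist_eq_norm] using ((eventually_gt_atTop M).and
      (Metric.tendsto_nhds.1 (he.tendsto_proj (z M)) _ (hδ j))).exists
  choose next hlt hnext using hnext
  let N : ℕ → ℕ := fun j => Nat.rec (motive := fun _ => ℕ) 0 next j
  refine ⟨N, fun j => z (N j), strictMono_nat_of_lt_succ fun j => hlt j (N j),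
    fun j => ⟨hzY _, hz1 _, ?_⟩⟩
  have hblock : ∑ n ∈ Ico (N j) (N (j + 1)), he.coeff (z (N j)) n • e n
      = he.proj (N (j + 1)) (z (N j)) - he.proj (N j) (z (N j)) :=
    sum_Ico_eq_sub _ (hlt j (N j)).le
  rw [hblock, hPz, sub_zero, norm_sub_rev]
  exact hnext j (N j)

theorem proj_sum_Ico_smul {N : ℕ → ℕ} (hN : StrictMono N) (b : ℕ → ℝ) (i k : ℕ) :
    he.proj (N k) (∑ n ∈ Ico (N i) (N (i + 1)), b n • e n) =
      if i < k then ∑ n ∈ Ico (N i) (N (i + 1)), b n • e n else 0 := by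
  rw [proj_sum_smul]
  split_ifs with hik
  · rw [filter_true_of_mem fun n hn => (mem_Ico.1 hn).2.trans_le (hN.monotone hik)]
  · rw [filter_false_of_mem fun n hn =>
      not_lt.2 ((hN.monotone (not_lt.1 hik)).trans (mem_Ico.1 hn).1), sum_empty]

theorem norm_smul_le_of_proj_eq {K : ℝ} (hK : ∀ N x, ‖he.proj N x‖ ≤ K * ‖x‖) {N : ℕ → ℕ}
    {u : ℕ → X} (hu : ∀ i k, he.proj (N k) (u i) = if i < k then u i else 0) (c : ℕ → ℝ)
    {s : Finset ℕ} {j : ℕ} (hj : j ∈ s) :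
    ‖c j • u j‖ ≤ 2 * K * ‖∑ i ∈ s, c i • u i‖ := by
  set z := ∑ i ∈ s, c i • u i
  have hdiff : ∀ i, (if i < j + 1 then u i else 0) - (if i < j then u i else 0) =
      if j = i then u i else 0 := fun i => by
    split_ifs <;> first | (exfalso; omega) | simp
  have hblock : he.proj (N (j + 1)) z - he.proj (N j) z = c j • u j := by
    simp only [z, map_sum, map_smul, hu, ← sum_sub_distrib, ← smul_sub, hdiff]
    simp only [smul_ite, smul_zero, sum_ite_eq, if_pos hj]
  calc ‖c j • u j‖ = ‖he.proj (N (j + 1)) z - he.proj (N j) z‖ := by rw [hblock]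
    _ ≤ ‖he.proj (N (j + 1)) z‖ + ‖he.proj (N j) z‖ := norm_sub_le _ _
    _ ≤ K * ‖z‖ + K * ‖z‖ := add_le_add (hK _ _) (hK _ _)
    _ = 2 * K * ‖z‖ := by ring

theorem abs_le_mul_norm_sum_blocks {K : ℝ} (hK : ∀ N x, ‖he.proj N x‖ ≤ K * ‖x‖) {N : ℕ → ℕ}
    (hN : StrictMono N) {b : ℕ → ℕ → ℝ}
    (hb : ∀ j, 1 / 2 ≤ ‖∑ n ∈ Ico (N j) (N (j + 1)), b j n • e n‖) (c : ℕ → ℝ) (s : Finset ℕ) :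
    ∀ j ∈ s, |c j| ≤ 4 * K * ‖∑ i ∈ s, c i • ∑ n ∈ Ico (N i) (N (i + 1)), b i n • e n‖ := by
  intro j hj
  have := he.norm_smul_le_of_proj_eq hK (fun i k => he.proj_sum_Ico_smul hN (b i) i k) c hj
  rw [norm_smul, Real.norm_eq_abs] at this
  nlinarith [hb j, abs_nonneg (c j)]

end IsSchauderBasis

section Sequences

variable {X : Type*} [NormedAddCommGroup X] [NormedSpace ℝ X]

theorem isBlockBasic_sum_Ico (e : ℕ → X) {N : ℕ → ℕ} (hN : StrictMono N) (b : ℕ → ℕ → ℝ) :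
    IsBlockBasic e fun j => ∑ n ∈ Ico (N j) (N (j + 1)), b j n • e n := by
  have hlt : ∀ {j j' n}, j < j' → n ∈ Ico (N j) (N (j + 1)) → n ∉ Ico (N j') (N (j' + 1)) :=
    fun {j j' n} hjj' hn hn' => by
      have := hN.monotone (show j + 1 ≤ j' from hjj')
      simp only [mem_Ico] at hn hn'
      omega
  have huniq : ∀ {j j' n}, n ∈ Ico (N j) (N (j + 1)) → n ∈ Ico (N j') (N (j' + 1)) → j = j' :=
    fun hn hn' => le_antisymm (not_lt.1 fun h => hlt h hn' hn) (not_lt.1 fun h => hlt h hn hn')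
  classical
  refine ⟨fun j => Ico (N j) (N (j + 1)),
    fun n => if h : ∃ j, n ∈ Ico (N j) (N (j + 1)) then b h.choose n else 0,
    fun j => nonempty_Ico.2 (hN j.lt_succ_self),
    fun j m hm k hk => (mem_Ico.1 hm).2.trans_le (mem_Ico.1 hk).1,
    fun j => sum_congr rfl fun n hn => ?_⟩
  have h : ∃ j, n ∈ Ico (N j) (N (j + 1)) := ⟨j, hn⟩
  simp only [dif_pos h, huniq h.choose_spec hn]

theorem seqEquiv_of_sum_norm_sub_le {u y : ℕ → X} {A : ℝ}
    (hcoord : ∀ (c : ℕ → ℝ) (s : Finset ℕ), ∀ j ∈ s, |c j| ≤ A * ‖∑ i ∈ s, c i • u i‖)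
    (hsmall : ∀ s : Finset ℕ, A * ∑ j ∈ s, ‖y j - u j‖ ≤ 1 / 2) : SeqEquiv y u := by
  have hclose : ∀ (c : ℕ → ℝ) (s : Finset ℕ),
      ‖∑ j ∈ s, c j • y j - ∑ j ∈ s, c j • u j‖ ≤ ‖∑ j ∈ s, c j • u j‖ / 2 := by
    intro c s
    calc ‖∑ j ∈ s, c j • y j - ∑ j ∈ s, c j • u j‖ = ‖∑ j ∈ s, c j • (y j - u j)‖ := by
          simp only [smul_sub, sum_sub_distrib]
      _ ≤ ∑ j ∈ s, |c j| * ‖y j - u j‖ := by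
          simpa only [norm_smul, Real.norm_eq_abs] using norm_sum_le s fun j => c j • (y j - u j)
      _ ≤ ∑ j ∈ s, A * ‖∑ i ∈ s, c i • u i‖ * ‖y j - u j‖ := by
          gcongr with j hj
          exact hcoord c s j hj
      _ = ‖∑ i ∈ s, c i • u i‖ * (A * ∑ j ∈ s, ‖y j - u j‖) := by
          rw [mul_sum, mul_sum]
          exact sum_congr rfl fun j _ => by ring
      _ ≤ ‖∑ j ∈ s, c j • u j‖ / 2 :=
          (mul_le_mul_of_nonneg_left (hsmall s) (norm_nonneg _)).trans_eq (by ring)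
  refine ⟨2, one_le_two, fun c s => ?_⟩
  have h1 := norm_sub_norm_le (∑ j ∈ s, c j • y j) (∑ j ∈ s, c j • u j)
  have h2 := norm_sub_norm_le (∑ j ∈ s, c j • u j) (∑ j ∈ s, c j • y j)
  rw [norm_sub_rev] at h2
  have := hclose c s
  constructor <;> linarith [norm_nonneg (∑ j ∈ s, c j • u j)]

end Sequences

theorem statement3_general {X : Type*} [NormedAddCommGroup X] [NormedSpace ℝ X] [CompleteSpace X]
    (e : ℕ → X) (he : IsSchauderBasis e)
    (Y : Submodule ℝ X) (hYinf : ¬ FiniteDimensional ℝ Y) :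
    ∃ v : ℕ → X, (∀ j, v j ∈ Y) ∧ SemiNormalized v ∧
      ∃ u : ℕ → X, IsBlockBasic e u ∧ SeqEquiv v u := by
  obtain ⟨K, hK1, hK⟩ := he.exists_norm_proj_le
  set δ : ℕ → ℝ := fun j => (1 / 2) ^ j / (16 * K)
  have hδ : ∀ j, 0 < δ j := fun j => by positivity
  obtain ⟨N, y, hN, hy⟩ := he.exists_gliding_hump hYinf hδ
  choose hyY hy1 hyu using hy
  set u : ℕ → X := fun j => ∑ n ∈ Ico (N j) (N (j + 1)), he.coeff (y j) n • e n
  have hu : ∀ j, 1 / 2 ≤ ‖u j‖ := fun j => by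
    have : δ j ≤ 1 / 16 :=
      div_le_div₀ zero_le_one (pow_le_one₀ (by norm_num) (by norm_num)) (by norm_num) (by linarith)
    linarith [norm_sub_norm_le (y j) (u j), hy1 j, hyu j]
  refine ⟨y, hyY, ⟨1, 1, one_pos, fun j => by simp [hy1]⟩, u, isBlockBasic_sum_Ico e hN _,
    seqEquiv_of_sum_norm_sub_le (he.abs_le_mul_norm_sum_blocks hK hN hu) fun s => ?_⟩
  have hsum : ∑' j, δ j = 2 / (16 * K) := by rw [tsum_div_const, tsum_geometric_two]
  calc 4 * K * ∑ j ∈ s, ‖y j - u j‖ ≤ 4 * K * ∑' j, δ j := by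
        gcongr
        exact (sum_le_sum fun j _ => (hyu j).le).trans
          ((summable_geometric_two.div_const _).sum_le_tsum s fun j _ => (hδ j).le)
    _ = 1 / 2 := by rw [hsum]; field_simp; norm_num

theorem statement3 {X : Type*} [NormedAddCommGroup X] [NormedSpace ℝ X] [CompleteSpace X]
    (e : ℕ → X) (he : IsSchauderBasis e)
    (Y : Submodule ℝ X) (hYclosed : IsClosed (Y : Set X)) (hYinf : ¬ FiniteDimensional ℝ Y) :
    ∃ v : ℕ → X, (∀ j, v j ∈ Y) ∧ SemiNormalized v ∧
      ∃ u : ℕ → X, IsBlockBasic e u ∧ SeqEquiv v u :=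
  statement3_general e he Y hYinf
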